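/- arXiv:2510.05848 — 3 statements merged into one kernel-verified Lean document; each statement's English description precedes it below -/
import Mathlib

section
/- Let (R,+,·) be a binary alternating algebra (bilinear product over F₂ with x·x = 0 and all triple products zero). Then the operations + and ∘, where x∘y = x + y + x·y, satisfy the biskew brace identities: (x+y)∘z = x∘z + z + y∘z and x∘y + z = (x+z)∘z∘(y+z) for all x,y,z ∈ R. -/
/-- In a binary alternating algebra over `F₂`, the operations `+` and
`x ∘ y = x + y + x·y` satisfy the biskew brace identities. -/
theorem stmt1 {R : Type*} [AddCommGroup R] [Module (ZMod 2) R]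
    (mul : R →ₗ[ZMod 2] R →ₗ[ZMod 2] R)
    (halt : ∀ x : R, mul x x = 0)
    (hnil : ∀ x y z : R, mul (mul x y) z = 0 ∧ mul x (mul y z) = 0) :
    let circ : R → R → R := fun x y => x + y + mul x y
    (∀ x y z : R, circ (x + y) z = circ x z + z + circ y z) ∧
    (∀ x y z : R, circ x y + z = circ (circ (x + z) z) (y + z)) := by
  intro circ
  have h2 : ∀ a : R, a + a = 0 := by
    intro a
    have : (2 : ZMod 2) • a = a + a := two_smul _ a
    rw [show (2 : ZMod 2) = 0 from rfl, zero_smul] at this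
    exact this.symm
  have h2n : ∀ a : R, 2 • a = (0:R) := fun a => by rw [two_nsmul, h2]
  have h3n : ∀ a : R, 3 • a = a := fun a => by
    have h : (3:ℕ) • a = a + a + a := by abel
    rw [h, h2, zero_add]
  have h2z : ∀ a : R, (2:ℤ) • a = (0:R) := fun a => by rw [two_zsmul, h2]
  have h3z : ∀ a : R, (3:ℤ) • a = a := fun a => by
    have h : (3:ℤ) • a = a + a + a := by abel
    rw [h, h2, zero_add]
  constructor
  · intro x y z
    simp only [circ, map_add, LinearMap.add_apply]
    abel_nf
    simp only [h3n, h3z]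
  · intro x y z
    simp only [circ, map_add, LinearMap.add_apply, halt,
      (hnil x z y).1, (hnil x z z).1]
    abel_nf
    simp only [h3n, h2n, h3z, h2z, add_zero, zero_add, map_zero, LinearMap.zero_apply]
end

section
/- Let E_{ij} = e_{ij} + e_{ji} ∈ M₄(F₂). The 3-dimensional subspaces 𝔅 = ⟨E₁₄, E₂₃, E₁₃+E₂₄⟩ and 𝔆 = ⟨E₁₂, E₂₃, E₁₃+E₂₄⟩ of Λ₄ have identical rank multisets on nonzero elements (three elements of rank 2 and four of rank 4 each), yet there is no A ∈ GL(4,F₂) with A𝔅Aᵀ = 𝔆. -/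
open Matrix

/-- The matrix `E_{ij} = e_{ij} + e_{ji}` in `M₄(F₂)`. -/
def E4 (i j : Fin 4) : Matrix (Fin 4) (Fin 4) (ZMod 2) :=
  Matrix.single i j 1 + Matrix.single j i 1

/-!
Congruence `B ↦ A B Aᵀ` is linear and preserves rank. The three rank-2 elements `E₁₂`, `E₂₃`,
`E₁₂ + E₂₃` of `𝔆` all annihilate `e₄`, so a congruence carrying `𝔅` onto `𝔆` would send the
rank-2 elements `E₁₄`, `E₂₃` of `𝔅` to matrices annihilating `e₄`, and hence also their sum.
But `E₁₄ + E₂₃` is invertible.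

The rank counts come from listing the seven nonzero elements of each span: the rank-4 ones have
nonzero determinant, and each rank-2 one is congruent to some `E_{ij}`.
-/

open Submodule (span subset_span)

theorem mem_span_triple_zmod_two {V : Type*} [AddCommGroup V] [Module (ZMod 2) V] {a b c x : V} :
    x ∈ span (ZMod 2) {a, b, c} ↔
      x = 0 ∨ x = a ∨ x = b ∨ x = c ∨ x = a + b ∨ x = a + c ∨ x = b + c ∨ x = a + b + c := by
  have h01 : ∀ u : ZMod 2, u = 0 ∨ u = 1 := by decide
  constructor
  · rw [Submodule.mem_span_insert]
    rintro ⟨r, _, hz, rfl⟩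
    obtain ⟨s, t, rfl⟩ := Submodule.mem_span_pair.1 hz
    rcases h01 r with rfl | rfl <;> rcases h01 s with rfl | rfl <;> rcases h01 t with rfl | rfl <;>
      simp [← add_assoc]
  · have ha : a ∈ span (ZMod 2) {a, b, c} := subset_span (by simp)
    have hb : b ∈ span (ZMod 2) {a, b, c} := subset_span (by simp)
    have hc : c ∈ span (ZMod 2) {a, b, c} := subset_span (by simp)
    rintro (rfl | rfl | rfl | rfl | rfl | rfl | rfl | rfl) <;>
      simp only [zero_mem, ha, hb, hc, add_mem, add_mem (add_mem ha hb) hc]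

theorem setOf_mem_span_triple_rank_eq {n : Type*} [Fintype n] {a b c : Matrix n n (ZMod 2)}
    {r : ℕ} (hr : r ≠ 0) :
    {B | B ∈ span (ZMod 2) {a, b, c} ∧ B ≠ 0 ∧ B.rank = r} =
      (({a, b, c, a + b, a + c, b + c, a + b + c} : Finset _).filter (·.rank = r) : Set _) := by
  ext B
  simp only [Set.mem_ofPred_eq, mem_span_triple_zmod_two, Finset.coe_filter, Finset.mem_insert,
    Finset.mem_singleton]
  constructor
  · rintro ⟨hB | hB, -, hBr⟩
    · rw [hB, rank_zero] at hBr
      exact absurd hBr.symm hr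
    · exact ⟨hB, hBr⟩
  · rintro ⟨hB, hBr⟩
    refine ⟨Or.inr hB, fun h0 => hr ?_, hBr⟩
    rw [← hBr, h0, rank_zero]

section Rank

variable {n R : Type*} [Fintype n] [DecidableEq n] [CommRing R]

theorem rank_single_add_single [Nontrivial R] {i j : n} (hij : i ≠ j) :
    (single i j (1 : R) + single j i 1).rank = 2 := by
  apply le_antisymm
  · calc _ ≤ ({i, j} : Finset n).card := by
          refine rank_le_card_of_support_subset _ _ (Function.support_subset_iff'.2 fun k hk => ?_)
          simp only [Finset.coe_insert, Finset.coe_singleton, Set.mem_insert_iff,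
            Set.mem_singleton_iff, not_or] at hk
          ext l
          simp [Ne.symm hk.1, Ne.symm hk.2]
      _ = 2 := Finset.card_pair hij
  · have hsub : (single i j (1 : R) + single j i 1).submatrix ![i, j] ![j, i] = 1 := by
      ext a b
      fin_cases a <;> fin_cases b <;> simp [hij, hij.symm]
    calc 2 = (1 : Matrix (Fin 2) (Fin 2) R).rank := by simp [rank_one]
      _ = _ := by rw [hsub]
      _ ≤ _ := rank_submatrix_le _ _ _

theorem rank_mul_mul_transpose_of_isUnit {A : Matrix n n R} (hA : IsUnit A) (B : Matrix n n R) :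
    (A * B * Aᵀ).rank = B.rank := by
  have hdet : IsUnit A.det := (isUnit_iff_isUnit_det A).1 hA
  rw [rank_mul_eq_left_of_isUnit_det _ _ (by rwa [det_transpose]),
    rank_mul_eq_right_of_isUnit_det _ _ hdet]

end Rank

-- `E₁₃ + E₂₄`; the indices of `E4` are 0-based.
def F : Matrix (Fin 4) (Fin 4) (ZMod 2) := E4 0 2 + E4 1 3

def 𝔅 : Submodule (ZMod 2) (Matrix (Fin 4) (Fin 4) (ZMod 2)) := span (ZMod 2) {E4 0 3, E4 1 2, F}

def 𝔆 : Submodule (ZMod 2) (Matrix (Fin 4) (Fin 4) (ZMod 2)) := span (ZMod 2) {E4 0 1, E4 1 2, F}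

theorem rank_E4 {i j : Fin 4} (hij : i ≠ j) : (E4 i j).rank = 2 := rank_single_add_single hij

-- `A` fixes `e₂, e₃, e₄` and sends `e₁ ↦ e₁ + e₃`.
theorem rank_E4_01_add_E4_12 : (E4 0 1 + E4 1 2).rank = 2 := by
  let A : Matrix (Fin 4) (Fin 4) (ZMod 2) := 1 + single 2 0 1
  have hA : A * A = 1 := by decide
  rw [show E4 0 1 + E4 1 2 = A * E4 0 1 * Aᵀ by decide,
    rank_mul_mul_transpose_of_isUnit ⟨⟨A, A, hA, hA⟩, rfl⟩, rank_E4 (by decide)]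

-- `A` sends `e₁ ↦ e₁ + e₂`, `e₃ ↦ e₃ + e₄`, so `A E₁₃ Aᵀ = E₁₃ + E₁₄ + E₂₃ + E₂₄`.
theorem rank_E4_03_add_E4_12_add_F : (E4 0 3 + E4 1 2 + F).rank = 2 := by
  let A : Matrix (Fin 4) (Fin 4) (ZMod 2) := 1 + single 1 0 1 + single 3 2 1
  have hA : A * A = 1 := by decide
  rw [show E4 0 3 + E4 1 2 + F = A * E4 0 2 * Aᵀ by decide,
    rank_mul_mul_transpose_of_isUnit ⟨⟨A, A, hA, hA⟩, rfl⟩, rank_E4 (by decide)]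

theorem rank_F : F.rank = 4 := rank_of_det_ne_zero (by decide)

theorem rank_E4_03_add_E4_12 : (E4 0 3 + E4 1 2).rank = 4 := rank_of_det_ne_zero (by decide)

theorem rank_E4_03_add_F : (E4 0 3 + F).rank = 4 := rank_of_det_ne_zero (by decide)

theorem rank_E4_12_add_F : (E4 1 2 + F).rank = 4 := rank_of_det_ne_zero (by decide)

theorem rank_E4_01_add_F : (E4 0 1 + F).rank = 4 := rank_of_det_ne_zero (by decide)

theorem rank_E4_01_add_E4_12_add_F : (E4 0 1 + E4 1 2 + F).rank = 4 :=
  rank_of_det_ne_zero (by decide)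

theorem setOf_mem_𝔅_rank_eq_two :
    {B | B ∈ 𝔅 ∧ B ≠ 0 ∧ B.rank = 2} =
      (({E4 0 3, E4 1 2, E4 0 3 + E4 1 2 + F} : Finset _) : Set _) := by
  rw [𝔅, setOf_mem_span_triple_rank_eq two_ne_zero]
  simp [Finset.filter_insert, Finset.filter_singleton, rank_E4, rank_F, rank_E4_03_add_E4_12,
    rank_E4_03_add_F, rank_E4_12_add_F, rank_E4_03_add_E4_12_add_F]

theorem setOf_mem_𝔅_rank_eq_four :
    {B | B ∈ 𝔅 ∧ B ≠ 0 ∧ B.rank = 4} =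
      (({F, E4 0 3 + E4 1 2, E4 0 3 + F, E4 1 2 + F} : Finset _) : Set _) := by
  rw [𝔅, setOf_mem_span_triple_rank_eq four_ne_zero]
  simp [Finset.filter_insert, Finset.filter_singleton, rank_E4, rank_F, rank_E4_03_add_E4_12,
    rank_E4_03_add_F, rank_E4_12_add_F, rank_E4_03_add_E4_12_add_F]

theorem setOf_mem_𝔆_rank_eq_two :
    {C | C ∈ 𝔆 ∧ C ≠ 0 ∧ C.rank = 2} =
      (({E4 0 1, E4 1 2, E4 0 1 + E4 1 2} : Finset _) : Set _) := by
  rw [𝔆, setOf_mem_span_triple_rank_eq two_ne_zero]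
  simp [Finset.filter_insert, Finset.filter_singleton, rank_E4, rank_F, rank_E4_01_add_E4_12,
    rank_E4_01_add_F, rank_E4_12_add_F, rank_E4_01_add_E4_12_add_F]

theorem setOf_mem_𝔆_rank_eq_four :
    {C | C ∈ 𝔆 ∧ C ≠ 0 ∧ C.rank = 4} =
      (({F, E4 0 1 + F, E4 1 2 + F, E4 0 1 + E4 1 2 + F} : Finset _) : Set _) := by
  rw [𝔆, setOf_mem_span_triple_rank_eq four_ne_zero]
  simp [Finset.filter_insert, Finset.filter_singleton, rank_E4, rank_F, rank_E4_01_add_E4_12,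
    rank_E4_01_add_F, rank_E4_12_add_F, rank_E4_01_add_E4_12_add_F]

theorem mulVec_single_three_eq_zero_of_mem_𝔆 {C : Matrix (Fin 4) (Fin 4) (ZMod 2)} (hC : C ∈ 𝔆)
    (hr : C.rank = 2) : C *ᵥ Pi.single 3 1 = 0 := by
  have hC' : C ∈ ({E4 0 1, E4 1 2, E4 0 1 + E4 1 2} : Finset _) := by
    rw [← Finset.mem_coe, ← setOf_mem_𝔆_rank_eq_two]
    exact ⟨hC, fun h => by simp [h] at hr, hr⟩
  simp only [Finset.mem_insert, Finset.mem_singleton] at hC'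
  rcases hC' with rfl | rfl | rfl <;> decide

theorem not_exists_congruence_𝔅_𝔆 :
    ¬ ∃ A : Matrix (Fin 4) (Fin 4) (ZMod 2), IsUnit A ∧
      (fun B => A * B * Aᵀ) '' (𝔅 : Set (Matrix (Fin 4) (Fin 4) (ZMod 2))) = 𝔆 := by
  rintro ⟨A, hA, himg⟩
  have hker : ∀ B ∈ 𝔅, B.rank = 2 → (A * B * Aᵀ) *ᵥ Pi.single 3 1 = 0 := fun B hB hr =>
    mulVec_single_three_eq_zero_of_mem_𝔆 (by rw [← SetLike.mem_coe, ← himg]; exact ⟨B, hB, rfl⟩)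
      (by rw [rank_mul_mul_transpose_of_isUnit hA, hr])
  have hsum : (A * (E4 0 3 + E4 1 2) * Aᵀ) *ᵥ Pi.single 3 1 = 0 := by
    rw [mul_add, add_mul, add_mulVec,
      hker _ (subset_span (by simp)) (rank_E4 (by decide)),
      hker _ (subset_span (by simp)) (rank_E4 (by decide)), add_zero]
  have hdet : (A * (E4 0 3 + E4 1 2) * Aᵀ).det ≠ 0 := by
    have hA' : A.det ≠ 0 := ((isUnit_iff_isUnit_det A).1 hA).ne_zero
    rw [det_mul, det_mul, det_transpose]
    exact mul_ne_zero (mul_ne_zero hA' (by decide)) hA'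
  exact hdet (exists_mulVec_eq_zero_iff.1 ⟨_, Pi.single_ne_zero_iff.2 one_ne_zero, hsum⟩)

/-- The subspaces `𝔅 = ⟨E₁₄, E₂₃, E₁₃+E₂₄⟩` and
`𝔆 = ⟨E₁₂, E₂₃, E₁₃+E₂₄⟩` of `Λ₄` have the same rank multisets on nonzero
elements (three of rank 2 and four of rank 4 each), yet are not congruent. -/
theorem stmt12 :
    let 𝔅 : Submodule (ZMod 2) (Matrix (Fin 4) (Fin 4) (ZMod 2)) :=
      Submodule.span (ZMod 2) {E4 0 3, E4 1 2, E4 0 2 + E4 1 3}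
    let 𝔆 : Submodule (ZMod 2) (Matrix (Fin 4) (Fin 4) (ZMod 2)) :=
      Submodule.span (ZMod 2) {E4 0 1, E4 1 2, E4 0 2 + E4 1 3}
    ({B : Matrix (Fin 4) (Fin 4) (ZMod 2) | B ∈ 𝔅 ∧ B ≠ 0 ∧ B.rank = 2}.ncard = 3 ∧
     {C : Matrix (Fin 4) (Fin 4) (ZMod 2) | C ∈ 𝔆 ∧ C ≠ 0 ∧ C.rank = 2}.ncard = 3 ∧
     {B : Matrix (Fin 4) (Fin 4) (ZMod 2) | B ∈ 𝔅 ∧ B ≠ 0 ∧ B.rank = 4}.ncard = 4 ∧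
     {C : Matrix (Fin 4) (Fin 4) (ZMod 2) | C ∈ 𝔆 ∧ C ≠ 0 ∧ C.rank = 4}.ncard = 4) ∧
    ¬ ∃ A : Matrix (Fin 4) (Fin 4) (ZMod 2), IsUnit A ∧
        (fun B => A * B * Aᵀ) '' (𝔅 : Set (Matrix (Fin 4) (Fin 4) (ZMod 2)))
          = (𝔆 : Set (Matrix (Fin 4) (Fin 4) (ZMod 2))) := by
  refine ⟨⟨?_, ?_, ?_, ?_⟩, not_exists_congruence_𝔅_𝔆⟩
  · erw [setOf_mem_𝔅_rank_eq_two, Set.ncard_coe_finset]; decide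
  · erw [setOf_mem_𝔆_rank_eq_two, Set.ncard_coe_finset]; decide
  · erw [setOf_mem_𝔅_rank_eq_four, Set.ncard_coe_finset]; decide
  · erw [setOf_mem_𝔆_rank_eq_four, Set.ncard_coe_finset]; decide
end

section
/- Let R be a finite-dimensional binary alternating algebra with Ann(R) = R² (primitive), R = V ⊕ R² with dim V = m and dim R² = d. Then 1 + (m mod 2) ≤ d ≤ m(m−1)/2; in particular, if m is odd then d ≥ 2. -/
/-!
The values of `φ` span `W`, so `φ` induces a surjection `⋀²V → W` and `d ≤ (m choose 2)`.
If `d = 1`, then `φ` is a nondegenerate alternating form on `V`, so its Gram matrix is an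
invertible alternating matrix, which forces `m` to be even: in characteristic `2` the
permutations `σ` and `σ⁻¹` contribute equal terms to the determinant, and every involution of a
set of odd size has a fixed point, where the zero diagonal kills its term.
-/

open Module

namespace Matrix

variable {R n : Type*} [CommRing R] [Fintype n] [DecidableEq n]

theorem det_eq_zero_of_isSymm_of_diag_eq_zero [CharP R 2] (hn : Odd (Fintype.card n))
    {M : Matrix n n R} (hM : M.IsSymm) (hdiag : ∀ i, M i i = 0) : M.det = 0 := by
  have hsign (σ : Equiv.Perm n) (x : R) : Equiv.Perm.sign σ • x = x := by
    rcases Int.units_eq_one_or (Equiv.Perm.sign σ) with h | h <;> simp [h, CharTwo.neg_eq]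
  have hinv (σ : Equiv.Perm n) : ∏ i, M (σ⁻¹ i) i = ∏ i, M (σ i) i := by
    rw [← Equiv.prod_comp σ]
    simp only [Equiv.Perm.inv_def, Equiv.symm_apply_apply]
    exact Finset.prod_congr rfl fun i _ => hM.apply (σ i) i
  rw [det_apply]
  refine Finset.sum_involution (fun σ _ => σ⁻¹) (fun σ _ => ?_) (fun σ _ hσ hσσ => ?_)
    (fun _ _ => Finset.mem_univ _) (fun σ _ => inv_inv σ)
  · rw [hsign, hsign, hinv, CharTwo.add_self_eq_zero]
  · have : Fact (Nat.Prime 2) := ⟨Nat.prime_two⟩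
    obtain ⟨i, hi⟩ := Equiv.Perm.exists_fixed_point_of_prime (p := 2) (n := 1)
      (by simpa [← even_iff_two_dvd] using hn) (σ := σ)
      (by rw [pow_one, sq]; nth_rw 1 [← hσσ]; exact inv_mul_cancel σ)
    exact hσ (by rw [hsign]; exact Finset.prod_eq_zero (Finset.mem_univ i) (by rw [hi, hdiag]))

theorem det_eq_zero_of_transpose_eq_neg_of_diag_eq_zero {K : Type*} [Field K]
    (hn : Odd (Fintype.card n)) {M : Matrix n n K} (hM : Mᵀ = -M)
    (hdiag : ∀ i, M i i = 0) : M.det = 0 := by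
  by_cases hK : ringChar K = 2
  · have : CharP K 2 := ringChar.of_eq hK
    refine det_eq_zero_of_isSymm_of_diag_eq_zero hn ?_ hdiag
    rw [IsSymm, hM]
    ext i j
    exact CharTwo.neg_eq _
  · have h : M.det = -M.det := by
      conv_lhs => rw [← det_transpose, hM, det_neg, hn.neg_one_pow, neg_one_mul]
    exact (mul_eq_zero.mp (by linear_combination h : (2 : K) * M.det = 0)).resolve_left
      (Ring.two_ne_zero hK)

end Matrix

theorem LinearMap.BilinForm.even_finrank_of_isAlt_of_nondegenerate {K V : Type*} [Field K]
    [AddCommGroup V] [Module K V] [FiniteDimensional K V] {B : LinearMap.BilinForm K V}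
    (hB : B.IsAlt) (hnd : B.Nondegenerate) : Even (finrank K V) := by
  by_contra hodd
  let b := Module.finBasis K V
  refine (nondegenerate_iff_det_ne_zero b).mp hnd
    (Matrix.det_eq_zero_of_transpose_eq_neg_of_diag_eq_zero (by simpa using hodd) ?_ fun i => ?_)
  · ext i j
    simpa [LinearMap.BilinForm.toMatrix_apply] using (LinearMap.IsAlt.neg hB (b i) (b j)).symm
  · simp [LinearMap.BilinForm.toMatrix_apply, hB.self_eq_zero]

def LinearMap.IsAlt.toAlternatingMap {R M N : Type*} [CommRing R] [AddCommGroup M] [Module R M]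
    [AddCommGroup N] [Module R N] {φ : M →ₗ[R] M →ₗ[R] N} (hφ : φ.IsAlt) :
    M [⋀^Fin 2]→ₗ[R] N where
  toFun v := φ (v 0) (v 1)
  map_update_add' v i x y := by fin_cases i <;> simp
  map_update_smul' v i c x := by fin_cases i <;> simp
  map_eq_zero_of_eq' v i j hv hij := by
    fin_cases i <;> fin_cases j <;> simp_all [hφ.self_eq_zero]

section AlternatingBilinear

variable {K V W : Type*} [Field K] [AddCommGroup V] [Module K V] [AddCommGroup W] [Module K W]
  {φ : V →ₗ[K] V →ₗ[K] W}

theorem LinearMap.IsAlt.even_finrank_of_finrank_eq_one [FiniteDimensional K V] (hφ : φ.IsAlt)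
    (hsep : φ.SeparatingLeft) (hW : finrank K W = 1) : Even (finrank K V) := by
  have := Module.finite_of_finrank_eq_succ hW
  let e : W ≃ₗ[K] K := LinearEquiv.ofFinrankEq W K (by simpa using hW)
  have hB : (φ.compr₂ e.toLinearMap).IsAlt := fun x => by simp [hφ.self_eq_zero]
  refine LinearMap.BilinForm.even_finrank_of_isAlt_of_nondegenerate hB
    (hB.isRefl.nondegenerate_iff_separatingLeft.mpr fun x hx => hsep x fun y => ?_)
  simpa using hx y

theorem LinearMap.IsAlt.finrank_le_choose_two [FiniteDimensional K V] (hφ : φ.IsAlt)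
    (hspan : Submodule.span K {w : W | ∃ x y : V, w = φ x y} = ⊤) :
    finrank K W ≤ (finrank K V).choose 2 := by
  let F := exteriorPower.alternatingMapLinearEquiv hφ.toAlternatingMap
  have hF : Function.Surjective F := by
    rw [← LinearMap.range_eq_top, eq_top_iff, ← hspan, Submodule.span_le]
    rintro _ ⟨x, y, rfl⟩
    exact ⟨exteriorPower.ιMulti K 2 ![x, y], by simp [F, LinearMap.IsAlt.toAlternatingMap]⟩
  exact (LinearMap.finrank_le_finrank_of_surjective hF).trans_eq (exteriorPower.finrank_eq K 2)

end AlternatingBilinear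

/-- Let `R = V ⊕ R²` be a primitive finite-dimensional binary
alternating algebra over `F₂`, described by a nondegenerate alternating
bilinear map `φ : V × V → W` whose values span `W = R²` (primitivity:
`Ann(R) = R²`), with `m = dim V` and `d = dim W`. Then
`1 + (m mod 2) ≤ d ≤ m(m−1)/2`; in particular if `m` is odd then `d ≥ 2`. -/
theorem stmt19 {V W : Type*} [AddCommGroup V] [Module (ZMod 2) V]
    [AddCommGroup W] [Module (ZMod 2) W]
    [FiniteDimensional (ZMod 2) V] [FiniteDimensional (ZMod 2) W]
    [Nontrivial V]
    (φ : V →ₗ[ZMod 2] V →ₗ[ZMod 2] W)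
    (halt : ∀ x : V, φ x x = 0)
    (hnondeg : ∀ x : V, x ≠ 0 → ∃ y : V, φ x y ≠ 0)
    (hprim : Submodule.span (ZMod 2) {w : W | ∃ x y : V, w = φ x y} = ⊤) :
    1 + Module.finrank (ZMod 2) V % 2 ≤ Module.finrank (ZMod 2) W ∧
    Module.finrank (ZMod 2) W ≤
      Module.finrank (ZMod 2) V * (Module.finrank (ZMod 2) V - 1) / 2 := by
  have hsep : φ.SeparatingLeft := fun x hx => by
    by_contra hx0
    obtain ⟨y, hy⟩ := hnondeg x hx0
    exact hy (hx y)
  have : Nontrivial W := by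
    obtain ⟨x, hx⟩ := exists_ne (0 : V)
    obtain ⟨y, hy⟩ := hnondeg x hx
    exact nontrivial_of_ne _ _ hy
  have hW : 0 < finrank (ZMod 2) W := finrank_pos
  refine ⟨?_, Nat.choose_two_right _ ▸ LinearMap.IsAlt.finrank_le_choose_two halt hprim⟩
  rcases Nat.even_or_odd (finrank (ZMod 2) V) with hV | hV
  · rw [Nat.even_iff.mp hV]
    omega
  · have hW1 : finrank (ZMod 2) W ≠ 1 := fun hW1 =>
      Nat.not_even_iff_odd.mpr hV (LinearMap.IsAlt.even_finrank_of_finrank_eq_one halt hsep hW1)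
    rw [Nat.odd_iff.mp hV]
    omega
end
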